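/- arXiv:2106.03587 — 7 statements merged into one kernel-verified Lean document; each statement's English description precedes it below -/
import Mathlib

section
/- Let u₁u₂u₃ be a path on 3 vertices with list assignment L satisfying |L(u₁)| ≥ 1, |L(u₂)| ≥ 2, |L(u₃)| ≥ 2, where lists are subsets of a 4-element color set. If there is no coloring φ with φ(uᵢ) ∈ L(uᵢ) and all three vertices receiving pairwise distinct colors, then there exists a 2-element set {a,b} with L(u₁) ⊆ {a,b}, L(u₂) = {a,b}, and L(u₃) = {a,b}. -/
open SimpleGraph


/-- The "122 lemma": a path `u₁u₂u₃` with lists (in a 4-element color set) of sizes at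
least `1, 2, 2` where all three vertices must get pairwise distinct colors is colorable,
unless the lists are as forced: `L(u₁) ⊆ {a,b}`, `L(u₂) = {a,b}`, `L(u₃) = {a,b}`. -/
theorem stmt5 (L : Fin 3 → Finset (Fin 4))
    (h1 : 1 ≤ (L 0).card) (h2 : 2 ≤ (L 1).card) (h3 : 2 ≤ (L 2).card)
    (hno : ¬∃ φ : Fin 3 → Fin 4, (∀ i, φ i ∈ L i) ∧ Function.Injective φ) :
    ∃ a b : Fin 4, a ≠ b ∧ L 0 ⊆ {a, b} ∧ L 1 = {a, b} ∧ L 2 = {a, b} := by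
  -- key: no rainbow triple exists
  have key : ∀ a ∈ L 0, ∀ b ∈ L 1, ∀ c ∈ L 2, a ≠ b → a ≠ c → b ≠ c → False := by
    intro a ha b hb c hc hab hac hbc
    apply hno
    refine ⟨![a, b, c], ?_, ?_⟩
    · intro i; fin_cases i <;> simpa
    · intro i j hij
      fin_cases i <;> fin_cases j <;> simp_all [Matrix.cons_val_zero, Matrix.cons_val_one]
  obtain ⟨a, ha⟩ := Finset.card_pos.mp (lt_of_lt_of_le one_pos h1)
  -- pick b ∈ L 1 with b ≠ a
  have hb' : ((L 1) \ {a}).Nonempty := by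
    apply Finset.card_pos.mp
    have := Finset.le_card_sdiff ({a} : Finset (Fin 4)) (L 1)
    simp only [Finset.card_singleton] at this
    omega
  obtain ⟨b, hb⟩ := hb'
  rw [Finset.mem_sdiff, Finset.mem_singleton] at hb
  obtain ⟨hb1, hba⟩ := hb
  have hab : a ≠ b := fun h => hba h.symm
  -- general: for x ∈ L 0, y ∈ L 1 with x ≠ y, L 2 ⊆ {x, y}
  have hL2sub : ∀ x ∈ L 0, ∀ y ∈ L 1, x ≠ y → L 2 ⊆ {x, y} := by
    intro x hx y hy hxy c hc
    by_contra hcn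
    simp only [Finset.mem_insert, Finset.mem_singleton, not_or] at hcn
    exact key x hx y hy c hc hxy (fun h => hcn.1 h.symm) (fun h => hcn.2 h.symm)
  have h2ab : L 2 = {a, b} := by
    apply Finset.eq_of_subset_of_card_le (hL2sub a ha b hb1 hab)
    rwa [Finset.card_insert_of_notMem (by simpa using hab), Finset.card_singleton]
  have h1sub : L 1 ⊆ {a, b} := by
    intro y hy
    by_contra hyn
    simp only [Finset.mem_insert, Finset.mem_singleton, not_or] at hyn
    have hsub := hL2sub a ha y hy (fun h => hyn.1 h.symm)
    rw [h2ab] at hsub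
    have : b ∈ ({a, y} : Finset (Fin 4)) := hsub (by simp)
    simp only [Finset.mem_insert, Finset.mem_singleton] at this
    rcases this with h | h
    · exact hba h
    · exact hyn.2 h.symm
  have h1ab : L 1 = {a, b} := by
    apply Finset.eq_of_subset_of_card_le h1sub
    rwa [Finset.card_insert_of_notMem (by simpa using hab), Finset.card_singleton]
  refine ⟨a, b, hab, ?_, h1ab, h2ab⟩
  intro x hx
  by_contra hxn
  simp only [Finset.mem_insert, Finset.mem_singleton, not_or] at hxn
  exact key x hx a (by rw [h1ab]; simp) b (by rw [h2ab]; simp) hxn.1 hxn.2 hab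
end

section
/- Let u₁u₂u₃u₄u₅ be a path on 5 vertices with the 2-distance constraint (vertices at distance ≤ 2 on the path get distinct colors). If |L(u₁)| ≥ 2, |L(u₂)| ≥ 2, |L(u₃)| ≥ 3, |L(u₄)| ≥ 3, |L(u₅)| ≥ 2, then a 2-distance list coloring exists. -/
open SimpleGraph

/-- A 2-distance list coloring of the path `u₁ ⋯ uₙ`: each vertex gets a color from its
list and vertices at distance at most 2 on the path get distinct colors. -/
def PathColoring {n : ℕ} {α : Type*} (L : Fin n → Finset α) (φ : Fin n → α) : Prop :=
  (∀ i, φ i ∈ L i) ∧ ∀ i j : Fin n, i.val < j.val → j.val ≤ i.val + 2 → φ i ≠ φ j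

private lemma build_col {α : Type*} (L : Fin 5 → Finset α) (c0 c1 c2 c3 c4 : α)
    (m0 : c0 ∈ L 0) (m1 : c1 ∈ L 1) (m2 : c2 ∈ L 2) (m3 : c3 ∈ L 3) (m4 : c4 ∈ L 4)
    (d01 : c0 ≠ c1) (d02 : c0 ≠ c2) (d12 : c1 ≠ c2) (d13 : c1 ≠ c3)
    (d23 : c2 ≠ c3) (d24 : c2 ≠ c4) (d34 : c3 ≠ c4) :
    PathColoring L ![c0, c1, c2, c3, c4] := by
  constructor
  · intro i; fin_cases i <;> simpa
  · intro i j hij hji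
    fin_cases i <;> fin_cases j <;> simp_all

private lemma exists_ne_of_two_le {α : Type*} {s : Finset α} (hs : 2 ≤ s.card) (x : α) :
    ∃ a ∈ s, a ≠ x := by
  have hs1 : 1 < s.card := by omega
  obtain ⟨a, ha, b, hb, hab⟩ := Finset.one_lt_card.mp hs1
  rcases eq_or_ne a x with rfl | h
  · exact ⟨b, hb, hab.symm⟩
  · exact ⟨a, ha, h⟩

theorem stmt7 {α : Type*} (L : Fin 5 → Finset α)
    (h1 : 2 ≤ (L 0).card) (h2 : 2 ≤ (L 1).card) (h3 : 3 ≤ (L 2).card)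
    (h4 : 3 ≤ (L 3).card) (h5 : 2 ≤ (L 4).card) :
    ∃ φ : Fin 5 → α, PathColoring L φ := by
  classical
  by_contra hno
  push_neg at hno
  -- key claim: every c1 ∈ L 1 satisfies c1 ∉ L 4 and L 3 = insert c1 (L 4)
  have key : ∀ c1 ∈ L 1, c1 ∉ L 4 ∧ L 3 = insert c1 (L 4) := by
    intro c1 hc1
    -- choose c0 ∈ L 0 distinct from c1
    obtain ⟨c0, hc0, hc01⟩ := exists_ne_of_two_le h1 c1
    -- choose c2 ∈ L 2 distinct from c0 and c1
    obtain ⟨c2, hc2', hc2ne⟩ : ∃ c2 ∈ (L 2 \ {c0, c1}), True := by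
      have hcard : 1 ≤ (L 2 \ {c0, c1}).card := by
        have hd := Finset.le_card_sdiff ({c0, c1} : Finset α) (L 2)
        have h2le : ({c0, c1} : Finset α).card ≤ 2 := by
          have := Finset.card_insert_le c0 ({c1} : Finset α)
          simp only [Finset.card_singleton] at this
          omega
        omega
      obtain ⟨c2, hc2⟩ := Finset.card_pos.mp hcard
      exact ⟨c2, hc2, trivial⟩
    rw [Finset.mem_sdiff, Finset.mem_insert, Finset.mem_singleton] at hc2'
    obtain ⟨hc2, hc2ne'⟩ := hc2'
    push_neg at hc2ne'
    obtain ⟨hc20, hc21⟩ := hc2ne'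
    -- any admissible c3 forces L 4 ⊆ {c2, c3}
    have H : ∀ c3 ∈ L 3, c3 ≠ c1 → c3 ≠ c2 → L 4 ⊆ {c2, c3} := by
      intro c3 hc3 hc31 hc32
      by_contra hsub
      obtain ⟨c4, hc4, hc4n⟩ := Finset.not_subset.mp hsub
      rw [Finset.mem_insert, Finset.mem_singleton] at hc4n
      push_neg at hc4n
      exact hno _ (build_col L c0 c1 c2 c3 c4 hc0 hc1 hc2 hc3 hc4
        hc01 (Ne.symm hc20) (Ne.symm hc21) hc31.symm hc32.symm
        (Ne.symm hc4n.1) (Ne.symm hc4n.2))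
    -- the set T = L 3 \ {c1, c2} has exactly one element
    set T := (L 3).erase c1 |>.erase c2 with hT
    have hTsub : ∀ x ∈ T, x ∈ L 3 ∧ x ≠ c1 ∧ x ≠ c2 := by
      intro x hx
      simp only [hT, Finset.mem_erase] at hx
      exact ⟨hx.2.2, hx.2.1, hx.1⟩
    have hTcard : 1 ≤ T.card := by
      have e1 : (L 3).card - 1 ≤ ((L 3).erase c1).card := Finset.pred_card_le_card_erase
      have e2 : ((L 3).erase c1).card - 1 ≤ T.card := Finset.pred_card_le_card_erase
      omega
    have hTone : T.card = 1 := by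
      by_contra hne
      have h2T : 1 < T.card := by omega
      obtain ⟨d, hd, d', hd', hdd⟩ := Finset.one_lt_card.mp h2T
      obtain ⟨hd3, hd1, hd2⟩ := hTsub d hd
      obtain ⟨hd3', hd1', hd2'⟩ := hTsub d' hd'
      have s1 := H d hd3 hd1 hd2
      have s2 := H d' hd3' hd1' hd2'
      have h4' : 1 < (L 4).card := by omega
      obtain ⟨e, he, e', he', hee⟩ := Finset.one_lt_card.mp h4'
      have key2 : ∀ x ∈ L 4, x ≠ c2 → x = d ∧ x = d' := by
        intro x hx hxc
        have t1 := s1 hx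
        have t2 := s2 hx
        simp only [Finset.mem_insert, Finset.mem_singleton] at t1 t2
        exact ⟨t1.resolve_left hxc, t2.resolve_left hxc⟩
      rcases eq_or_ne e c2 with rfl | hec
      · obtain ⟨p, q⟩ := key2 e' he' (Ne.symm hee)
        exact hdd (p.symm.trans q)
      · obtain ⟨p, q⟩ := key2 e he hec
        exact hdd (p.symm.trans q)
    obtain ⟨c3, hc3T⟩ := Finset.card_eq_one.mp hTone
    obtain ⟨hc3, hc31, hc32⟩ := hTsub c3 (by rw [hc3T]; exact Finset.mem_singleton_self c3)
    -- L 3 = {c1, c2, c3}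
    have hL3sub : L 3 ⊆ insert c1 (insert c2 {c3}) := by
      intro x hx
      rcases eq_or_ne x c1 with rfl | hx1
      · exact Finset.mem_insert_self _ _
      rcases eq_or_ne x c2 with rfl | hx2
      · exact Finset.mem_insert_of_mem (Finset.mem_insert_self _ _)
      have : x ∈ T := by simp [hT, Finset.mem_erase, hx1, hx2, hx]
      rw [hc3T, Finset.mem_singleton] at this
      subst this
      simp
    have hL3 : L 3 = insert c1 (insert c2 {c3}) := by
      apply Finset.eq_of_subset_of_card_le hL3sub
      have e1 := Finset.card_insert_le c1 (insert c2 ({c3} : Finset α))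
      have e2 := Finset.card_insert_le c2 ({c3} : Finset α)
      simp only [Finset.card_singleton] at e2
      omega
    -- L 4 = {c2, c3}
    have hL4sub : L 4 ⊆ {c2, c3} := H c3 hc3 hc31 hc32
    have hL4 : L 4 = {c2, c3} := by
      apply Finset.eq_of_subset_of_card_le hL4sub
      have e2 := Finset.card_insert_le c2 ({c3} : Finset α)
      simp only [Finset.card_singleton] at e2
      omega
    constructor
    · rw [hL4]
      simp only [Finset.mem_insert, Finset.mem_singleton]
      push_neg
      exact ⟨Ne.symm hc21, Ne.symm hc31⟩
    · rw [hL4, hL3]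
  -- finish: two distinct elements of L 1
  have h1' : 1 < (L 1).card := by omega
  obtain ⟨a, ha, b, hb, hab⟩ := Finset.one_lt_card.mp h1'
  obtain ⟨ha4, hLa⟩ := key a ha
  obtain ⟨hb4, hLb⟩ := key b hb
  have : a ∈ insert b (L 4) := by rw [← hLb, hLa]; exact Finset.mem_insert_self _ _
  rcases Finset.mem_insert.mp this with rfl | h
  · exact hab rfl
  · exact ha4 h
end

section
/- Let u₁u₂u₃u₄u₅u₆ be a path on 6 vertices with the 2-distance constraint. If |L(u₁)| ≥ 2, |L(u₂)| ≥ 2, |L(u₃)| ≥ 4, |L(u₄)| ≥ 3, |L(u₅)| ≥ 2, |L(u₆)| ≥ 2, then a 2-distance list coloring exists. -/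
open SimpleGraph

section Aux

variable {α : Type*} [DecidableEq α]

lemma exists_avoid2' {S : Finset α} (h : 2 ≤ S.card) (a : α) :
    ∃ y ∈ S, y ≠ a := by
  by_contra hc
  push_neg at hc
  have hsub : S ⊆ {a} := fun z hz => Finset.mem_singleton.mpr (hc z hz)
  have := Finset.card_le_card hsub
  simp at this; omega

lemma exists_avoid3' {S : Finset α} (h : 3 ≤ S.card) (a b : α) :
    ∃ y ∈ S, y ≠ a ∧ y ≠ b := by
  by_contra hc
  push_neg at hc
  have hsub : S ⊆ {a, b} := by
    intro z hz
    rcases eq_or_ne z a with rfl | hza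
    · simp
    · simp [hc z hz hza]
  have h1 := Finset.card_le_card hsub
  have h2 : ({a, b} : Finset α).card ≤ 2 := by
    have := Finset.card_insert_le a ({b} : Finset α)
    simp at this ⊢; omega
  omega

lemma exists_avoid4' {S : Finset α} (h : 4 ≤ S.card) (a b c : α) :
    ∃ y ∈ S, y ≠ a ∧ y ≠ b ∧ y ≠ c := by
  by_contra hc
  push_neg at hc
  have hsub : S ⊆ {a, b, c} := by
    intro z hz
    rcases eq_or_ne z a with rfl | hza
    · simp
    rcases eq_or_ne z b with rfl | hzb
    · simp
    · simp [(hc z hz hza hzb)]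
  have h1 := Finset.card_le_card hsub
  have h2 : ({a, b, c} : Finset α).card ≤ 3 := by
    have t1 := Finset.card_insert_le a ({b, c} : Finset α)
    have t2 := Finset.card_insert_le b ({c} : Finset α)
    simp at t1 t2 ⊢; omega
  omega

/-- If the left three vertices cannot be completed given colors `b` (on u4) and `c` (on u5),
then `S3 ⊆ S1 ∪ {b,c}`. -/
lemma bad_structure {S1 S2 S3 : Finset α}
    (c1 : S1.card = 2) (c2 : S2.card = 2) (c3 : S3.card = 4) (b c : α)
    (hng : ¬ ∃ x3 ∈ S3, x3 ≠ b ∧ x3 ≠ c ∧ ∃ x2 ∈ S2, x2 ≠ x3 ∧ x2 ≠ b ∧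
      ∃ x1 ∈ S1, x1 ≠ x2 ∧ x1 ≠ x3) :
    S3 ⊆ S1 ∪ {b, c} := by
  push_neg at hng
  intro x hx
  rcases eq_or_ne x b with rfl | hxb
  · simp
  rcases eq_or_ne x c with rfl | hxc
  · simp
  -- x is a candidate for u3
  rw [Finset.mem_union]
  left
  by_cases hE : ∃ e ∈ S2, e ≠ x ∧ e ≠ b
  · obtain ⟨e, heS, hex, heb⟩ := hE
    have hall : ∀ y ∈ S1, y = e ∨ y = x := by
      intro y hy
      by_cases h : y = e
      · exact Or.inl h
      · exact Or.inr (hng x hx hxb hxc e heS hex heb y hy h)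
    have hsub : S1 ⊆ {e, x} := by
      intro z hz; rcases hall z hz with rfl | rfl <;> simp
    have hcard : ({e, x} : Finset α).card ≤ 2 := by
      have := Finset.card_insert_le e ({x} : Finset α); simp at this ⊢; omega
    have heq : S1 = {e, x} := Finset.eq_of_subset_of_card_le hsub (by omega)
    rw [heq]; simp
  · -- S2 = {x, b}
    push_neg at hE
    have hS2 : S2 ⊆ {x, b} := by
      intro z hz
      rcases eq_or_ne z x with rfl | hzx
      · simp
      · simp [hE z hz hzx]
    have hS2card : ({x, b} : Finset α).card ≤ 2 := by
      have := Finset.card_insert_le x ({b} : Finset α); simp at this ⊢; omega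
    have hS2eq : S2 = {x, b} := Finset.eq_of_subset_of_card_le hS2 (by omega)
    have hxS2 : x ∈ S2 := by rw [hS2eq]; simp
    -- pick another candidate y
    obtain ⟨y, hyS, hyb, hyc, hyx⟩ := exists_avoid4' (by omega) b c x (S := S3)
    have hall : ∀ z ∈ S1, z = x ∨ z = y := by
      intro z hz
      by_cases h : z = x
      · exact Or.inl h
      · exact Or.inr (hng y hyS hyb hyc x hxS2 (Ne.symm hyx) hxb z hz h)
    have hsub : S1 ⊆ {x, y} := by
      intro z hz; rcases hall z hz with rfl | rfl <;> simp
    have hcard : ({x, y} : Finset α).card ≤ 2 := by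
      have := Finset.card_insert_le x ({y} : Finset α); simp at this ⊢; omega
    have heq : S1 = {x, y} := Finset.eq_of_subset_of_card_le hsub (by omega)
    rw [heq]; simp

lemma key (S1 S2 S3 S4 S5 S6 : Finset α)
    (c1 : S1.card = 2) (c2 : S2.card = 2) (c3 : S3.card = 4)
    (c4 : S4.card = 3) (c5 : S5.card = 2) (c6 : S6.card = 2) :
    ∃ x1 ∈ S1, ∃ x2 ∈ S2, ∃ x3 ∈ S3, ∃ x4 ∈ S4, ∃ x5 ∈ S5, ∃ x6 ∈ S6,
      x1 ≠ x2 ∧ x1 ≠ x3 ∧ x2 ≠ x3 ∧ x2 ≠ x4 ∧ x3 ≠ x4 ∧ x3 ≠ x5 ∧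
      x4 ≠ x5 ∧ x4 ≠ x6 ∧ x5 ≠ x6 := by
  by_cases H : ∃ x6 ∈ S6, ∃ x5 ∈ S5, x5 ≠ x6 ∧ ∃ x4 ∈ S4, x4 ≠ x5 ∧ x4 ≠ x6 ∧
      ∃ x3 ∈ S3, x3 ≠ x4 ∧ x3 ≠ x5 ∧ ∃ x2 ∈ S2, x2 ≠ x3 ∧ x2 ≠ x4 ∧
      ∃ x1 ∈ S1, x1 ≠ x2 ∧ x1 ≠ x3
  · obtain ⟨x6, h6, x5, h5, n56, x4, h4, n45, n46, x3, h3, n34, n35,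
      x2, h2, n23, n24, x1, h1, n12, n13⟩ := H
    exact ⟨x1, h1, x2, h2, x3, h3, x4, h4, x5, h5, x6, h6,
      n12, n13, n23, n24, n34, n35, n45, n46, n56⟩
  · exfalso
    have F : ∀ f ∈ S6, ∀ g ∈ S5, g ≠ f → ∀ p ∈ S4, p ≠ g → p ≠ f →
        S3 = S1 ∪ {p, g} ∧ p ∉ S1 ∧ g ∉ S1 := by
      intro f hf g hg hgf p hp hpg hpf
      have hsub : S3 ⊆ S1 ∪ {p, g} := by
        refine bad_structure c1 c2 c3 p g ?_
        intro hgood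
        exact H ⟨f, hf, g, hg, hgf, p, hp, hpg, hpf, hgood⟩
      have hcard2 : ({p, g} : Finset α).card ≤ 2 := by
        have := Finset.card_insert_le p ({g} : Finset α); simp at this ⊢; omega
      have hcardU : (S1 ∪ {p, g}).card ≤ 4 := by
        have := Finset.card_union_le S1 ({p, g} : Finset α); omega
      have hEq : S3 = S1 ∪ {p, g} :=
        Finset.eq_of_subset_of_card_le hsub (by omega)
      have hcard4 : (S1 ∪ {p, g}).card = 4 := by rw [← hEq]; exact c3
      refine ⟨hEq, ?_, ?_⟩
      · intro hpS1
        have hsub2 : S1 ∪ {p, g} ⊆ S1 ∪ {g} := by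
          intro z hz
          simp only [Finset.mem_union, Finset.mem_insert, Finset.mem_singleton] at hz ⊢
          rcases hz with h | h | h
          · exact Or.inl h
          · exact Or.inl (h ▸ hpS1)
          · exact Or.inr h
        have h1 := Finset.card_le_card hsub2
        have h2 := Finset.card_union_le S1 ({g} : Finset α)
        simp only [Finset.card_singleton] at h2; omega
      · intro hgS1
        have hsub2 : S1 ∪ {p, g} ⊆ S1 ∪ {p} := by
          intro z hz
          simp only [Finset.mem_union, Finset.mem_insert, Finset.mem_singleton] at hz ⊢
          rcases hz with h | h | h
          · exact Or.inl h
          · exact Or.inr h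
          · exact Or.inl (h ▸ hgS1)
        have h1 := Finset.card_le_card hsub2
        have h2 := Finset.card_union_le S1 ({p} : Finset α)
        simp only [Finset.card_singleton] at h2; omega
    obtain ⟨f1, hf1, f2, hf2, hf12⟩ := Finset.one_lt_card.mp (by omega : 1 < S6.card)
    obtain ⟨g1, hg1, hg1f1⟩ := exists_avoid2' (le_of_eq c5.symm) f1
    obtain ⟨g2, hg2, hg2f2⟩ := exists_avoid2' (le_of_eq c5.symm) f2
    obtain ⟨p, hp, hpg1, hpf1⟩ := exists_avoid3' (le_of_eq c4.symm) g1 f1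
    obtain ⟨q, hq, hqg2, hqf2⟩ := exists_avoid3' (le_of_eq c4.symm) g2 f2
    obtain ⟨E1, hpS1, hg1S1⟩ := F f1 hf1 g1 hg1 hg1f1 p hp hpg1 hpf1
    obtain ⟨E2, hqS1, hg2S1⟩ := F f2 hf2 g2 hg2 hg2f2 q hq hqg2 hqf2
    -- uniqueness of the 4th color given (f1, g1)
    have huniq : ∀ z ∈ S4, z ≠ g1 → z ≠ f1 → z = p := by
      intro z hz hzg1 hzf1
      obtain ⟨Ez, hzS1, -⟩ := F f1 hf1 g1 hg1 hg1f1 z hz hzg1 hzf1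
      have hzS3 : z ∈ S3 := by rw [Ez]; simp
      rw [E1] at hzS3
      simp only [Finset.mem_union, Finset.mem_insert, Finset.mem_singleton] at hzS3
      rcases hzS3 with h | h | h
      · exact absurd h hzS1
      · exact h
      · exact absurd h hzg1
    -- hence S4 = {g1, f1, p}
    have hS4sub : S4 ⊆ {g1, f1, p} := by
      intro z hz
      simp only [Finset.mem_insert, Finset.mem_singleton]
      rcases eq_or_ne z g1 with rfl | h1'
      · exact Or.inl rfl
      rcases eq_or_ne z f1 with rfl | h2'
      · exact Or.inr (Or.inl rfl)
      · exact Or.inr (Or.inr (huniq z hz h1' h2'))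
    have hf2S4 : f2 ∈ S4 := by
      -- symmetric uniqueness for (f2, g2)
      have huniq2 : ∀ z ∈ S4, z ≠ g2 → z ≠ f2 → z = q := by
        intro z hz hzg2 hzf2
        obtain ⟨Ez, hzS1, -⟩ := F f2 hf2 g2 hg2 hg2f2 z hz hzg2 hzf2
        have hzS3 : z ∈ S3 := by rw [Ez]; simp
        rw [E2] at hzS3
        simp only [Finset.mem_union, Finset.mem_insert, Finset.mem_singleton] at hzS3
        rcases hzS3 with h | h | h
        · exact absurd h hzS1
        · exact h
        · exact absurd h hzg2
      have hS4sub2 : S4 ⊆ {g2, f2, q} := by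
        intro z hz
        simp only [Finset.mem_insert, Finset.mem_singleton]
        rcases eq_or_ne z g2 with rfl | h1'
        · exact Or.inl rfl
        rcases eq_or_ne z f2 with rfl | h2'
        · exact Or.inr (Or.inl rfl)
        · exact Or.inr (Or.inr (huniq2 z hz h1' h2'))
      have hcard3 : ({g2, f2, q} : Finset α).card ≤ 3 := by
        have t1 := Finset.card_insert_le g2 ({f2, q} : Finset α)
        have t2 := Finset.card_insert_le f2 ({q} : Finset α)
        simp at t1 t2 ⊢; omega
      have : S4 = {g2, f2, q} := Finset.eq_of_subset_of_card_le hS4sub2 (by omega)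
      rw [this]; simp
    -- membership facts in S3
    have hq_mem : q = p ∨ q = g1 := by
      have : q ∈ S3 := by rw [E2]; simp
      rw [E1] at this
      simp only [Finset.mem_union, Finset.mem_insert, Finset.mem_singleton] at this
      rcases this with h | h | h
      · exact absurd h hqS1
      · exact Or.inl h
      · exact Or.inr h
    have hg2_mem : g2 = p ∨ g2 = g1 := by
      have : g2 ∈ S3 := by rw [E2]; simp
      rw [E1] at this
      simp only [Finset.mem_union, Finset.mem_insert, Finset.mem_singleton] at this
      rcases this with h | h | h
      · exact absurd h hg2S1
      · exact Or.inl h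
      · exact Or.inr h
    -- f2 ∈ {g1, f1, p}
    have hf2cases := hS4sub hf2S4
    simp only [Finset.mem_insert, Finset.mem_singleton] at hf2cases
    rcases hf2cases with rfl | rfl | rfl
    · -- f2 = g1
      rcases hg2_mem with rfl | rfl
      · -- g2 = p
        rcases hq_mem with rfl | rfl
        · exact hqg2 rfl
        · exact hqf2 rfl
      · exact hg2f2 rfl
    · exact hf12 rfl
    · -- f2 = p
      rcases hq_mem with h | hqg1
      · exact hqf2 h
      rcases hg2_mem with h | hg2g1
      · exact hg2f2 h
      have hsub' : S3 ⊆ S1 ∪ {g1} := by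
        rw [E2]
        intro z hz
        simp only [Finset.mem_union, Finset.mem_insert, Finset.mem_singleton] at hz ⊢
        rcases hz with h | h | h
        · exact Or.inl h
        · exact Or.inr (h.trans hqg1)
        · exact Or.inr (h.trans hg2g1)
      have h1 := Finset.card_le_card hsub'
      have h2 := Finset.card_union_le S1 ({g1} : Finset α)
      simp only [Finset.card_singleton] at h2; omega

end Aux

theorem stmt8 {α : Type*} (L : Fin 6 → Finset α)
    (h1 : 2 ≤ (L 0).card) (h2 : 2 ≤ (L 1).card) (h3 : 4 ≤ (L 2).card)
    (h4 : 3 ≤ (L 3).card) (h5 : 2 ≤ (L 4).card) (h6 : 2 ≤ (L 5).card) :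
    ∃ φ : Fin 6 → α, PathColoring L φ := by
  classical
  obtain ⟨S1, hS1, c1⟩ := Finset.exists_subset_card_eq h1
  obtain ⟨S2, hS2, c2⟩ := Finset.exists_subset_card_eq h2
  obtain ⟨S3, hS3, c3⟩ := Finset.exists_subset_card_eq h3
  obtain ⟨S4, hS4, c4⟩ := Finset.exists_subset_card_eq h4
  obtain ⟨S5, hS5, c5⟩ := Finset.exists_subset_card_eq h5
  obtain ⟨S6, hS6, c6⟩ := Finset.exists_subset_card_eq h6
  obtain ⟨x1, m1, x2, m2, x3, m3, x4, m4, x5, m5, x6, m6,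
    n12, n13, n23, n24, n34, n35, n45, n46, n56⟩ :=
    key S1 S2 S3 S4 S5 S6 c1 c2 c3 c4 c5 c6
  refine ⟨![x1, x2, x3, x4, x5, x6], ?_, ?_⟩
  · intro i
    fin_cases i
    · exact hS1 m1
    · exact hS2 m2
    · exact hS3 m3
    · exact hS4 m4
    · exact hS5 m5
    · exact hS6 m6
  · intro i j hij hij2
    fin_cases i <;> fin_cases j <;>
      simp_all [Matrix.cons_val_zero, Matrix.cons_val_one] <;> first | exact n46 | exact n56
end

section
/- Let H be the graph consisting of a path u₁u₂u₃u₄u₅ together with a pendant vertex u₃' adjacent to u₃, with the 2-distance constraint (vertices at distance at most 2 in H receive distinct colors). Suppose |L(u₁)| ≥ 2, |L(u₂)| ≥ 2, |L(u₃)| ≥ 4, |L(u₄)| ≥ 3, |L(u₅)| ≥ 2, |L(u₃')| ≥ 3. Then H admits a 2-distance list coloring. -/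
open SimpleGraph

section Helpers
variable {α : Type*} [DecidableEq α]

lemma pick3 {S : Finset α} (h : 4 ≤ S.card) (p q r : α) :
    ∃ x ∈ S, x ≠ p ∧ x ≠ q ∧ x ≠ r := by
  by_contra hc
  push_neg at hc
  have hsub : S ⊆ {p, q, r} := by
    intro x hx
    simp only [Finset.mem_insert, Finset.mem_singleton]
    by_cases h1 : x = p
    · exact Or.inl h1
    · by_cases h2 : x = q
      · exact Or.inr (Or.inl h2)
      · exact Or.inr (Or.inr (hc x hx h1 h2))
  have h3 : ({p, q, r} : Finset α).card ≤ 3 := by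
    apply (Finset.card_insert_le _ _).trans
    have := Finset.card_insert_le q ({r} : Finset α)
    simp only [Finset.card_singleton] at this
    omega
  have := (Finset.card_le_card hsub).trans h3
  omega

lemma pick2 {S : Finset α} (h : 3 ≤ S.card) (p q : α) :
    ∃ x ∈ S, x ≠ p ∧ x ≠ q := by
  by_contra hc
  push_neg at hc
  have hsub : S ⊆ {p, q} := by
    intro x hx
    simp only [Finset.mem_insert, Finset.mem_singleton]
    by_cases h1 : x = p
    · exact Or.inl h1
    · exact Or.inr (hc x hx h1)
  have h3 : ({p, q} : Finset α).card ≤ 2 := by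
    apply (Finset.card_insert_le _ _).trans
    simp
  have := (Finset.card_le_card hsub).trans h3
  omega

lemma pick1 {S : Finset α} (h : 2 ≤ S.card) (p : α) :
    ∃ x ∈ S, x ≠ p := by
  by_contra hc
  push_neg at hc
  have hsub : S ⊆ {p} := fun x hx => Finset.mem_singleton.mpr (hc x hx)
  have := (Finset.card_le_card hsub).trans (Finset.card_singleton p).le
  omega

lemma pickTwo {S : Finset α} (h : 2 ≤ S.card) : ∃ x ∈ S, ∃ y ∈ S, x ≠ y :=
  Finset.one_lt_card.mp h

lemma pickMem {S : Finset α} (h : 1 ≤ S.card) : ∃ x, x ∈ S :=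
  Finset.card_pos.mp h

lemma pickNotMem {S T : Finset α} (h : T.card < S.card) : ∃ x ∈ S, x ∉ T := by
  by_contra hc
  push_neg at hc
  exact absurd (Finset.card_le_card fun x hx => hc x hx) (not_le.mpr h)

end Helpers

lemma build {α : Type*} (L : Fin 5 → Finset α) (L' : Finset α) (a b x d e c : α)
    (ha : a ∈ L 0) (hb : b ∈ L 1) (hx : x ∈ L 2) (hd : d ∈ L 3) (he : e ∈ L 4) (hc : c ∈ L')
    (n1 : a ≠ b) (n2 : a ≠ x) (n3 : b ≠ x) (n4 : b ≠ d) (n5 : x ≠ d) (n6 : x ≠ e)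
    (n7 : d ≠ e) (n8 : c ≠ b) (n9 : c ≠ x) (n10 : c ≠ d) :
    ∃ (φ : Fin 5 → α) (c' : α), PathColoring L φ ∧ c' ∈ L' ∧
      c' ≠ φ 1 ∧ c' ≠ φ 2 ∧ c' ≠ φ 3 := by
  refine ⟨![a, b, x, d, e], c, ⟨?_, ?_⟩, hc, ?_, ?_, ?_⟩
  · intro i; fin_cases i <;> simpa
  · intro i j h1 h2
    fin_cases i <;> fin_cases j <;> simp_all [Fin.ext_iff]
  · simpa using n8
  · simpa using n9
  · simpa using n10

lemma save1 {α : Type*} [DecidableEq α] {A B C D E F : Finset α} {e0 : α}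
    (cA : 2 ≤ A.card) (cB : 2 ≤ B.card) (cC : 4 ≤ C.card) (cD : 3 ≤ D.card) (cF : 3 ≤ F.card)
    (he0E : e0 ∈ E) (he0C : e0 ∉ C) (he0D : e0 ∉ D) :
    ∃ a ∈ A, ∃ b ∈ B, ∃ x ∈ C, ∃ d ∈ D, ∃ e ∈ E, ∃ c ∈ F,
      a ≠ b ∧ a ≠ x ∧ b ≠ x ∧ b ≠ d ∧ x ≠ d ∧ x ≠ e ∧ d ≠ e ∧ c ≠ b ∧ c ≠ x ∧ c ≠ d := by
  obtain ⟨b, hbB⟩ := pickMem (le_trans one_le_two cB)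
  by_cases h1 : ∃ p, p ∈ A ∧ p ∈ D ∧ p ≠ b
  · obtain ⟨t, htA, htD, htb⟩ := h1
    obtain ⟨bb, hbbB, hbbt⟩ := pick1 cB t
    obtain ⟨c, hcF, hcbb, hct⟩ := pick2 cF bb t
    obtain ⟨x, hxC, hxt, hxbb, hxc⟩ := pick3 cC t bb c
    exact ⟨t, htA, bb, hbbB, x, hxC, t, htD, e0, he0E, c, hcF,
      Ne.symm hbbt, Ne.symm hxt, Ne.symm hxbb, hbbt, hxt,
      (by rintro rfl; exact he0C hxC), (by rintro rfl; exact he0D htD),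
      hcbb, Ne.symm hxc, hct⟩
  push_neg at h1
  by_cases h2 : ∃ p, p ∈ A ∧ p ∈ F ∧ p ≠ b
  · obtain ⟨t, htA, htF, htb⟩ := h2
    obtain ⟨d, hdD, hdb, hdt⟩ := pick2 cD b t
    obtain ⟨x, hxC, hxt, hxb, hxd⟩ := pick3 cC t b d
    exact ⟨t, htA, b, hbB, x, hxC, d, hdD, e0, he0E, t, htF,
      htb, Ne.symm hxt, Ne.symm hxb, Ne.symm hdb, hxd,
      (by rintro rfl; exact he0C hxC), (by rintro rfl; exact he0D hdD),
      htb, Ne.symm hxt, Ne.symm hdt⟩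
  push_neg at h2
  by_cases h3 : ∃ p, p ∈ A ∧ p ∉ C
  · obtain ⟨a0, ha0A, ha0C⟩ := h3
    obtain ⟨bb, hbbB, hbba0⟩ := pick1 cB a0
    obtain ⟨d, hdD, hdbb⟩ := pick1 (show 2 ≤ D.card by omega) bb
    obtain ⟨c, hcF, hcbb, hcd⟩ := pick2 cF bb d
    obtain ⟨x, hxC, hxbb, hxd, hxc⟩ := pick3 cC bb d c
    exact ⟨a0, ha0A, bb, hbbB, x, hxC, d, hdD, e0, he0E, c, hcF,
      Ne.symm hbba0, (by rintro rfl; exact ha0C hxC), Ne.symm hxbb, Ne.symm hdbb, hxd,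
      (by rintro rfl; exact he0C hxC), (by rintro rfl; exact he0D hdD),
      hcbb, Ne.symm hxc, hcd⟩
  push_neg at h3
  by_cases h4 : ∃ p, p ∈ B ∧ p ∉ C
  · obtain ⟨b0, hb0B, hb0C⟩ := h4
    obtain ⟨a, haA, hab0⟩ := pick1 cA b0
    obtain ⟨d, hdD, hdb0⟩ := pick1 (show 2 ≤ D.card by omega) b0
    obtain ⟨c, hcF, hcb0, hcd⟩ := pick2 cF b0 d
    obtain ⟨x, hxC, hxa, hxd, hxc⟩ := pick3 cC a d c
    exact ⟨a, haA, b0, hb0B, x, hxC, d, hdD, e0, he0E, c, hcF,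
      hab0, Ne.symm hxa, (by rintro rfl; exact hb0C hxC), Ne.symm hdb0, hxd,
      (by rintro rfl; exact he0C hxC), (by rintro rfl; exact he0D hdD),
      hcb0, Ne.symm hxc, hcd⟩
  push_neg at h4
  by_cases h5 : ∃ p, p ∈ D ∧ p ∉ C ∧ p ≠ b
  · obtain ⟨d1, hd1D, hd1C, hd1b⟩ := h5
    obtain ⟨a, haA, hab⟩ := pick1 cA b
    obtain ⟨c, hcF, hcb, hcd1⟩ := pick2 cF b d1
    obtain ⟨x, hxC, hxa, hxb, hxc⟩ := pick3 cC a b c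
    exact ⟨a, haA, b, hbB, x, hxC, d1, hd1D, e0, he0E, c, hcF,
      hab, Ne.symm hxa, Ne.symm hxb, Ne.symm hd1b, (by rintro rfl; exact hd1C hxC),
      (by rintro rfl; exact he0C hxC), (by rintro rfl; exact he0D hd1D),
      hcb, Ne.symm hxc, hcd1⟩
  push_neg at h5
  by_cases h6 : ∃ p, p ∈ F ∧ p ∉ C ∧ p ≠ b
  · obtain ⟨c1, hc1F, hc1C, hc1b⟩ := h6
    obtain ⟨d, hdD, hdb, hdc1⟩ := pick2 cD b c1
    obtain ⟨a, haA, hab⟩ := pick1 cA b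
    obtain ⟨x, hxC, hxa, hxb, hxd⟩ := pick3 cC a b d
    exact ⟨a, haA, b, hbB, x, hxC, d, hdD, e0, he0E, c1, hc1F,
      hab, Ne.symm hxa, Ne.symm hxb, Ne.symm hdb, hxd,
      (by rintro rfl; exact he0C hxC), (by rintro rfl; exact he0D hdD),
      hc1b, (by rintro rfl; exact hc1C hxC), Ne.symm hdc1⟩
  push_neg at h6
  obtain ⟨a, haA, hab⟩ := pick1 cA b
  obtain ⟨d, hdD, hdb⟩ := pick1 (show 2 ≤ D.card by omega) b
  obtain ⟨c, hcF, hcb, hcd⟩ := pick2 cF b d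
  by_cases h7 : ∃ x, x ∈ C ∧ x ≠ a ∧ x ≠ b ∧ x ≠ d ∧ x ≠ c
  · obtain ⟨x, hxC, hxa, hxb, hxd, hxc⟩ := h7
    exact ⟨a, haA, b, hbB, x, hxC, d, hdD, e0, he0E, c, hcF,
      hab, Ne.symm hxa, Ne.symm hxb, Ne.symm hdb, hxd,
      (by rintro rfl; exact he0C hxC), (by rintro rfl; exact he0D hdD),
      hcb, Ne.symm hxc, hcd⟩
  push_neg at h7
  by_cases hbA : b ∈ A
  · have hbF : b ∈ F := by
      by_contra hbF
      have hFsub : F ⊆ {d, c} := by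
        intro z hzF
        simp only [Finset.mem_insert, Finset.mem_singleton]
        have hzb : z ≠ b := by rintro rfl; exact hbF hzF
        have hzC : z ∈ C := by
          by_contra hcon
          exact hzb (h6 z hzF hcon)
        have hza : z ≠ a := by
          rintro rfl
          exact hab (h2 _ haA hzF)
        by_cases hzd : z = d
        · exact Or.inl hzd
        · exact Or.inr (h7 z hzC hza hzb hzd)
      have hle : ({d, c} : Finset α).card ≤ 2 := (Finset.card_insert_le _ _).trans (by simp)
      have := (Finset.card_le_card hFsub).trans hle
      omega
    obtain ⟨b2, hb2B, hb2b⟩ := pick1 cB b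
    obtain ⟨dd, hddD, hddb, hddb2⟩ := pick2 cD b b2
    obtain ⟨x, hxC, hxb, hxb2, hxdd⟩ := pick3 cC b b2 dd
    exact ⟨b, hbA, b2, hb2B, x, hxC, dd, hddD, e0, he0E, b, hbF,
      Ne.symm hb2b, Ne.symm hxb, Ne.symm hxb2, Ne.symm hddb2, hxdd,
      (by rintro rfl; exact he0C hxC), (by rintro rfl; exact he0D hddD),
      Ne.symm hb2b, Ne.symm hxb, Ne.symm hddb⟩
  · obtain ⟨a1, ha1A, a2, ha2A, h12⟩ := pickTwo cA
    have ha2C : a2 ∈ C := h3 a2 ha2A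
    exact ⟨a1, ha1A, b, hbB, a2, ha2C, d, hdD, e0, he0E, c, hcF,
      (by rintro rfl; exact hbA ha1A), h12, (by rintro rfl; exact hbA ha2A),
      Ne.symm hdb, (by rintro rfl; exact hdb (h1 _ ha2A hdD)),
      (by rintro rfl; exact he0C ha2C), (by rintro rfl; exact he0D hdD),
      hcb, (by rintro rfl; exact hbA ((h2 _ ha2A hcF) ▸ ha2A)), hcd⟩

/-- Path `u₁u₂u₃u₄u₅` plus a pendant vertex `u₃'` adjacent to `u₃`, 2-distance
constraint; `u₃'` is at distance at most 2 exactly from `u₂, u₃, u₄`. -/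
theorem stmt9 {α : Type*} (L : Fin 5 → Finset α) (L' : Finset α)
    (h1 : 2 ≤ (L 0).card) (h2 : 2 ≤ (L 1).card) (h3 : 4 ≤ (L 2).card)
    (h4 : 3 ≤ (L 3).card) (h5 : 2 ≤ (L 4).card) (h' : 3 ≤ L'.card) :
    ∃ (φ : Fin 5 → α) (c : α), PathColoring L φ ∧ c ∈ L' ∧
      c ≠ φ 1 ∧ c ≠ φ 2 ∧ c ≠ φ 3 := by
  classical
  obtain ⟨A, hAsub, hAcard⟩ := Finset.exists_subset_card_eq h1
  obtain ⟨B, hBsub, hBcard⟩ := Finset.exists_subset_card_eq h2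
  obtain ⟨C, hCsub, hCcard⟩ := Finset.exists_subset_card_eq h3
  obtain ⟨D, hDsub, hDcard⟩ := Finset.exists_subset_card_eq h4
  obtain ⟨E, hEsub, hEcard⟩ := Finset.exists_subset_card_eq h5
  obtain ⟨F, hFsub, hFcard⟩ := Finset.exists_subset_card_eq h'
  have cA : 2 ≤ A.card := hAcard.ge
  have cB : 2 ≤ B.card := hBcard.ge
  have cC : 4 ≤ C.card := hCcard.ge
  have cD : 3 ≤ D.card := hDcard.ge
  have cE : 2 ≤ E.card := hEcard.ge
  have cF : 3 ≤ F.card := hFcard.ge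
  suffices hG : ∃ a ∈ A, ∃ b ∈ B, ∃ x ∈ C, ∃ d ∈ D, ∃ e ∈ E, ∃ c ∈ F,
      a ≠ b ∧ a ≠ x ∧ b ≠ x ∧ b ≠ d ∧ x ≠ d ∧ x ≠ e ∧ d ≠ e ∧ c ≠ b ∧ c ≠ x ∧ c ≠ d by
    obtain ⟨a, ha, b, hb, x, hx, d, hd, e, he, c, hc,
      n1, n2, n3, n4, n5, n6, n7, n8, n9, n10⟩ := hG
    exact build L L' a b x d e c (hAsub ha) (hBsub hb) (hCsub hx) (hDsub hd) (hEsub he)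
      (hFsub hc) n1 n2 n3 n4 n5 n6 n7 n8 n9 n10
  by_cases hI : ∃ p, p ∈ B ∧ p ∈ E
  · -- CASE I : merge e = b
    obtain ⟨b, hbB, hbE⟩ := hI
    by_cases hI1 : ∃ p, p ∈ A ∧ p ∈ D ∧ p ≠ b
    · obtain ⟨t, htA, htD, htb⟩ := hI1
      obtain ⟨c, hcF, hcb, hct⟩ := pick2 cF b t
      obtain ⟨x, hxC, hxt, hxb, hxc⟩ := pick3 cC t b c
      exact ⟨t, htA, b, hbB, x, hxC, t, htD, b, hbE, c, hcF,
        htb, Ne.symm hxt, Ne.symm hxb, Ne.symm htb, hxt, hxb, htb, hcb, Ne.symm hxc, hct⟩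
    push_neg at hI1
    by_cases hI2 : ∃ p, p ∈ A ∧ p ∈ F ∧ p ≠ b
    · obtain ⟨t, htA, htF, htb⟩ := hI2
      obtain ⟨d, hdD, hdb, hdt⟩ := pick2 cD b t
      obtain ⟨x, hxC, hxt, hxb, hxd⟩ := pick3 cC t b d
      exact ⟨t, htA, b, hbB, x, hxC, d, hdD, b, hbE, t, htF,
        htb, Ne.symm hxt, Ne.symm hxb, Ne.symm hdb, hxd, hxb, hdb, htb, Ne.symm hxt, Ne.symm hdt⟩
    push_neg at hI2
    by_cases hI3 : ∃ p, p ∈ A ∧ p ∉ C ∧ p ≠ b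
    · obtain ⟨a, haA, haC, hab⟩ := hI3
      obtain ⟨d, hdD, hdb⟩ := pick1 (show 2 ≤ D.card by omega) b
      obtain ⟨c, hcF, hcb, hcd⟩ := pick2 cF b d
      obtain ⟨x, hxC, hxb, hxd, hxc⟩ := pick3 cC b d c
      exact ⟨a, haA, b, hbB, x, hxC, d, hdD, b, hbE, c, hcF,
        hab, (by rintro rfl; exact haC hxC), Ne.symm hxb, Ne.symm hdb, hxd, hxb, hdb,
        hcb, Ne.symm hxc, hcd⟩
    push_neg at hI3
    by_cases hbC : b ∉ C
    · obtain ⟨a, haA, hab⟩ := pick1 cA b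
      obtain ⟨d, hdD, hdb⟩ := pick1 (show 2 ≤ D.card by omega) b
      obtain ⟨c, hcF, hcb, hcd⟩ := pick2 cF b d
      obtain ⟨x, hxC, hxa, hxd, hxc⟩ := pick3 cC a d c
      exact ⟨a, haA, b, hbB, x, hxC, d, hdD, b, hbE, c, hcF,
        hab, Ne.symm hxa, (by rintro rfl; exact hbC hxC), Ne.symm hdb, hxd,
        (by rintro rfl; exact hbC hxC), hdb, hcb, Ne.symm hxc, hcd⟩
    rw [not_not] at hbC
    by_cases hI6 : ∃ p, p ∈ F ∧ p ∉ C ∧ p ≠ b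
    · obtain ⟨c0, hc0F, hc0C, hc0b⟩ := hI6
      obtain ⟨d, hdD, hdb, hdc0⟩ := pick2 cD b c0
      obtain ⟨a, haA, hab⟩ := pick1 cA b
      obtain ⟨x, hxC, hxa, hxb, hxd⟩ := pick3 cC a b d
      exact ⟨a, haA, b, hbB, x, hxC, d, hdD, b, hbE, c0, hc0F,
        hab, Ne.symm hxa, Ne.symm hxb, Ne.symm hdb, hxd, hxb, hdb,
        hc0b, (by rintro rfl; exact hc0C hxC), Ne.symm hdc0⟩
    push_neg at hI6
    by_cases hbA : b ∈ A
    · by_cases hbF : b ∈ F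
      · -- I.7.A
        obtain ⟨b2, hb2B, hb2b⟩ := pick1 cB b
        obtain ⟨d, hdD, hdb, hdb2⟩ := pick2 cD b b2
        obtain ⟨x, hxC, hxb, hxb2, hxd⟩ := pick3 cC b b2 d
        exact ⟨b, hbA, b2, hb2B, x, hxC, d, hdD, b, hbE, b, hbF,
          Ne.symm hb2b, Ne.symm hxb, Ne.symm hxb2, Ne.symm hdb2, hxd, hxb, hdb,
          Ne.symm hb2b, Ne.symm hxb, Ne.symm hdb⟩
      · -- I.7.C
        obtain ⟨a, haA, hab⟩ := pick1 cA b
        obtain ⟨d, hdD, hdb⟩ := pick1 (show 2 ≤ D.card by omega) b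
        obtain ⟨c1, hc1F, hc1d⟩ := pick1 (show 2 ≤ F.card by omega) d
        obtain ⟨c2, hc2F, hc2d, hc2c1⟩ := pick2 cF d c1
        have hc2C : c2 ∈ C := by
          by_contra hcon
          exact hbF ((hI6 c2 hc2F hcon) ▸ hc2F)
        exact ⟨a, haA, b, hbB, c2, hc2C, d, hdD, b, hbE, c1, hc1F,
          hab, (by rintro rfl; exact hab (hI2 _ haA hc2F)), (by rintro rfl; exact hbF hc2F),
          Ne.symm hdb, hc2d, (by rintro rfl; exact hbF hc2F), hdb,
          (by rintro rfl; exact hbF hc1F), Ne.symm hc2c1, hc1d⟩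
    · -- I.7.B
      obtain ⟨a1, ha1A, a2, ha2A, h12⟩ := pickTwo cA
      have ha2C : a2 ∈ C := by
        by_contra hcon
        exact hbA ((hI3 a2 ha2A hcon) ▸ ha2A)
      obtain ⟨d, hdD, hdb⟩ := pick1 (show 2 ≤ D.card by omega) b
      obtain ⟨c, hcF, hcb, hcd⟩ := pick2 cF b d
      exact ⟨a1, ha1A, b, hbB, a2, ha2C, d, hdD, b, hbE, c, hcF,
        (by rintro rfl; exact hbA ha1A), h12, (by rintro rfl; exact hbA ha2A),
        Ne.symm hdb, (by rintro rfl; exact hdb (hI1 _ ha2A hdD)),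
        (by rintro rfl; exact hbA ha2A), hdb,
        hcb, (by rintro rfl; exact hbA ((hI2 _ ha2A hcF) ▸ ha2A)), hcd⟩
  · -- CASE II
    push_neg at hI
    by_cases hAE : ∃ p, p ∈ A ∧ p ∈ E
    · -- II.1
      by_cases hAEF : ∃ p, p ∈ A ∧ p ∈ E ∧ p ∈ F
      · obtain ⟨t, htA, htE, htF⟩ := hAEF
        obtain ⟨b, hbB, hbt⟩ := pick1 cB t
        obtain ⟨d, hdD, hdb, hdt⟩ := pick2 cD b t
        obtain ⟨x, hxC, hxt, hxb, hxd⟩ := pick3 cC t b d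
        exact ⟨t, htA, b, hbB, x, hxC, d, hdD, t, htE, t, htF,
          Ne.symm hbt, Ne.symm hxt, Ne.symm hxb, Ne.symm hdb, hxd, hxt, hdt,
          Ne.symm hbt, Ne.symm hxt, Ne.symm hdt⟩
      · obtain ⟨t, htA, htE⟩ := hAE
        have htF : t ∉ F := fun hh => hAEF ⟨t, htA, htE, hh⟩
        have htB : t ∉ B := fun hh => hI t hh htE
        obtain ⟨b, hbB, hbt⟩ := pick1 cB t
        by_cases htC : t ∉ C
        · obtain ⟨d, hdD, hdb, hdt⟩ := pick2 cD b t
          obtain ⟨c, hcF, hcb, hcd⟩ := pick2 cF b d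
          obtain ⟨x, hxC, hxb, hxd, hxc⟩ := pick3 cC b d c
          exact ⟨t, htA, b, hbB, x, hxC, d, hdD, t, htE, c, hcF,
            Ne.symm hbt, (by rintro rfl; exact htC hxC), Ne.symm hxb, Ne.symm hdb, hxd,
            (by rintro rfl; exact htC hxC), hdt, hcb, Ne.symm hxc, hcd⟩
        rw [not_not] at htC
        by_cases hg1 : ∃ p, p ∈ B ∧ p ∉ C ∧ p ≠ t
        · obtain ⟨b0, hb0B, hb0C, hb0t⟩ := hg1
          obtain ⟨d, hdD, hdb0, hdt⟩ := pick2 cD b0 t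
          obtain ⟨c, hcF, hcb0, hcd⟩ := pick2 cF b0 d
          obtain ⟨x, hxC, hxt, hxd, hxc⟩ := pick3 cC t d c
          exact ⟨t, htA, b0, hb0B, x, hxC, d, hdD, t, htE, c, hcF,
            Ne.symm hb0t, Ne.symm hxt, (by rintro rfl; exact hb0C hxC), Ne.symm hdb0, hxd,
            hxt, hdt, hcb0, Ne.symm hxc, hcd⟩
        push_neg at hg1
        by_cases hg2 : ∃ p, p ∈ D ∧ p ∉ C ∧ p ≠ b ∧ p ≠ t
        · obtain ⟨d0, hd0D, hd0C, hd0b, hd0t⟩ := hg2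
          obtain ⟨c, hcF, hcb, hcd0⟩ := pick2 cF b d0
          obtain ⟨x, hxC, hxt, hxb, hxc⟩ := pick3 cC t b c
          exact ⟨t, htA, b, hbB, x, hxC, d0, hd0D, t, htE, c, hcF,
            Ne.symm hbt, Ne.symm hxt, Ne.symm hxb, Ne.symm hd0b,
            (by rintro rfl; exact hd0C hxC), hxt, hd0t, hcb, Ne.symm hxc, hcd0⟩
        push_neg at hg2
        by_cases hg3 : ∃ p, p ∈ F ∧ p ∉ C ∧ p ≠ b
        · obtain ⟨c0, hc0F, hc0C, hc0b⟩ := hg3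
          have hc0t : c0 ≠ t := by rintro rfl; exact hc0C htC
          by_cases hg4 : ∃ p, p ∈ D ∧ p ≠ b ∧ p ≠ t ∧ p ≠ c0
          · obtain ⟨d, hdD, hdb, hdt, hdc0⟩ := hg4
            obtain ⟨x, hxC, hxt, hxb, hxd⟩ := pick3 cC t b d
            exact ⟨t, htA, b, hbB, x, hxC, d, hdD, t, htE, c0, hc0F,
              Ne.symm hbt, Ne.symm hxt, Ne.symm hxb, Ne.symm hdb, hxd, hxt, hdt,
              hc0b, (by rintro rfl; exact hc0C hxC), Ne.symm hdc0⟩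
          · push_neg at hg4
            have htD : t ∈ D := by
              by_contra htD
              have hsub : D ⊆ {b, c0} := by
                intro z hzD
                simp only [Finset.mem_insert, Finset.mem_singleton]
                by_cases hzb : z = b
                · exact Or.inl hzb
                · by_cases hzt : z = t
                  · exact absurd (hzt ▸ hzD) htD
                  · exact Or.inr (hg4 z hzD hzb hzt)
              have hle : ({b, c0} : Finset α).card ≤ 2 :=
                (Finset.card_insert_le _ _).trans (by simp)
              have := (Finset.card_le_card hsub).trans hle
              omega
            obtain ⟨e2, he2E, he2t⟩ := pick1 cE t
            obtain ⟨x, hxC, hxt, hxb, hxe2⟩ := pick3 cC t b e2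
            exact ⟨t, htA, b, hbB, x, hxC, t, htD, e2, he2E, c0, hc0F,
              Ne.symm hbt, Ne.symm hxt, Ne.symm hxb, hbt, hxt, hxe2, Ne.symm he2t,
              hc0b, (by rintro rfl; exact hc0C hxC), hc0t⟩
        push_neg at hg3
        by_cases hg5 : ∃ p, p ∈ E ∧ p ∈ F
        · obtain ⟨s, hsE, hsF⟩ := hg5
          have hst : s ≠ t := by rintro rfl; exact htF hsF
          by_cases hg6 : ∃ p, p ∈ A ∧ p ∈ D
          · obtain ⟨u, huA, huD⟩ := hg6
            have hus : u ≠ s := by rintro rfl; exact hAEF ⟨_, huA, hsE, hsF⟩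
            obtain ⟨bb, hbbB, hbbu⟩ := pick1 cB u
            obtain ⟨x, hxC, hxu, hxbb, hxs⟩ := pick3 cC u bb s
            have hsbb : s ≠ bb := by rintro rfl; exact hI _ hbbB hsE
            exact ⟨u, huA, bb, hbbB, x, hxC, u, huD, s, hsE, s, hsF,
              Ne.symm hbbu, Ne.symm hxu, Ne.symm hxbb, hbbu, hxu, hxs, hus,
              hsbb, Ne.symm hxs, Ne.symm hus⟩
          · push_neg at hg6
            obtain ⟨a2, ha2A, ha2t⟩ := pick1 cA t
            obtain ⟨bb, hbbB, hbba2⟩ := pick1 cB a2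
            obtain ⟨d, hdD, hdbb, hds⟩ := pick2 cD bb s
            have hbbt : bb ≠ t := by rintro rfl; exact htB hbbB
            have hsbb : s ≠ bb := by rintro rfl; exact hI _ hbbB hsE
            exact ⟨a2, ha2A, bb, hbbB, t, htC, d, hdD, s, hsE, s, hsF,
              Ne.symm hbba2, ha2t, hbbt, Ne.symm hdbb,
              (by rintro rfl; exact hg6 _ htA hdD), Ne.symm hst, hds,
              hsbb, hst, Ne.symm hds⟩
        · push_neg at hg5
          obtain ⟨d, hdD, hdb, hdt⟩ := pick2 cD b t
          obtain ⟨c, hcF, hcb, hcd⟩ := pick2 cF b d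
          by_cases hx : ∃ x, x ∈ C ∧ x ≠ t ∧ x ≠ b ∧ x ≠ d ∧ x ≠ c
          · obtain ⟨x, hxC, hxt, hxb, hxd, hxc⟩ := hx
            exact ⟨t, htA, b, hbB, x, hxC, d, hdD, t, htE, c, hcF,
              Ne.symm hbt, Ne.symm hxt, Ne.symm hxb, Ne.symm hdb, hxd, hxt, hdt,
              hcb, Ne.symm hxc, hcd⟩
          · push_neg at hx
            obtain ⟨e2, he2E, he2t⟩ := pick1 cE t
            have he2b : e2 ≠ b := by rintro rfl; exact hI _ hbB he2E
            have he2F : e2 ∉ F := hg5 e2 he2E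
            have he2D : e2 ∉ D := by
              intro hh
              have he2C : e2 ∈ C := by
                by_contra hcon
                exact he2t (hg2 e2 hh hcon he2b)
              have he2d : e2 = d := by
                by_contra hcon
                exact he2F ((hx e2 he2C he2t he2b hcon).symm ▸ hcF)
              have hFsub : F ⊆ {b, c} := by
                intro z hzF
                simp only [Finset.mem_insert, Finset.mem_singleton]
                by_cases hzb : z = b
                · exact Or.inl hzb
                · right
                  have hzC : z ∈ C := by
                    by_contra hcon
                    exact hzb (hg3 z hzF hcon)
                  have hzt : z ≠ t := by rintro rfl; exact htF hzF
                  have hzd : z ≠ d := by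
                    rintro rfl
                    exact he2F (he2d.symm ▸ hzF)
                  exact hx z hzC hzt hzb hzd
              have hle : ({b, c} : Finset α).card ≤ 2 :=
                (Finset.card_insert_le _ _).trans (by simp)
              have := (Finset.card_le_card hFsub).trans hle
              omega
            obtain ⟨a2, ha2A, ha2t⟩ := pick1 cA t
            obtain ⟨bb, hbbB, hbba2⟩ := pick1 cB a2
            obtain ⟨dd, hddD, hddbb, hddt⟩ := pick2 cD bb t
            obtain ⟨cc, hccF, hccbb, hccdd⟩ := pick2 cF bb dd
            have hbbt : bb ≠ t := by rintro rfl; exact htB hbbB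
            exact ⟨a2, ha2A, bb, hbbB, t, htC, dd, hddD, e2, he2E, cc, hccF,
              Ne.symm hbba2, ha2t, hbbt, Ne.symm hddbb, Ne.symm hddt, Ne.symm he2t,
              (by rintro rfl; exact he2D hddD), hccbb,
              (by rintro rfl; exact htF hccF), hccdd⟩
    · -- II.2 / II.3
      push_neg at hAE
      by_cases hEF : ∃ p, p ∈ E ∧ p ∈ F
      · obtain ⟨s, hsE, hsF⟩ := hEF
        have hsA : s ∉ A := fun hh => hAE s hh hsE
        have hsB : s ∉ B := fun hh => hI s hh hsE
        by_cases hx0 : ∃ p, p ∈ E ∧ p ∈ C ∧ p ≠ s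
        · obtain ⟨x0, hx0E, hx0C, hx0s⟩ := hx0
          obtain ⟨d0, hd0D, hd0E⟩ :=
            pickNotMem (show E.card < D.card by rw [hEcard, hDcard]; omega)
          obtain ⟨b, hbB, hbd0⟩ := pick1 cB d0
          obtain ⟨a, haA, hab⟩ := pick1 cA b
          exact ⟨a, haA, b, hbB, x0, hx0C, d0, hd0D, s, hsE, s, hsF,
            hab, (by rintro rfl; exact hAE _ haA hx0E), (by rintro rfl; exact hI _ hbB hx0E),
            hbd0, (by rintro rfl; exact hd0E hx0E), hx0s,
            (by rintro rfl; exact hd0E hsE), (by rintro rfl; exact hsB hbB),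
            Ne.symm hx0s, (by rintro rfl; exact hd0E hsE)⟩
        · push_neg at hx0
          by_cases hsC : s ∈ C
          · obtain ⟨e0, he0E, he0s⟩ := pick1 cE s
            have he0C : e0 ∉ C := fun hh => he0s (hx0 e0 he0E hh)
            by_cases he0D : e0 ∈ D
            · obtain ⟨b, hbB⟩ := pickMem (le_trans one_le_two cB)
              obtain ⟨a, haA, hab⟩ := pick1 cA b
              obtain ⟨x, hxC, hxa, hxb, hxs⟩ := pick3 cC a b s
              exact ⟨a, haA, b, hbB, x, hxC, e0, he0D, s, hsE, s, hsF,
                hab, Ne.symm hxa, Ne.symm hxb, (by rintro rfl; exact hI _ hbB he0E),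
                (by rintro rfl; exact he0C hxC), hxs, he0s,
                (by rintro rfl; exact hsB hbB), Ne.symm hxs, Ne.symm he0s⟩
            · exact save1 cA cB cC cD cF he0E he0C he0D
          · obtain ⟨b, hbB⟩ := pickMem (le_trans one_le_two cB)
            obtain ⟨d, hdD, hdb, hds⟩ := pick2 cD b s
            obtain ⟨a, haA, hab⟩ := pick1 cA b
            obtain ⟨x, hxC, hxa, hxb, hxd⟩ := pick3 cC a b d
            exact ⟨a, haA, b, hbB, x, hxC, d, hdD, s, hsE, s, hsF,
              hab, Ne.symm hxa, Ne.symm hxb, Ne.symm hdb, hxd,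
              (by rintro rfl; exact hsC hxC), hds, (by rintro rfl; exact hsB hbB),
              (by rintro rfl; exact hsC hxC), Ne.symm hds⟩
      · push_neg at hEF
        by_cases hx0 : ∃ p, p ∈ E ∧ p ∈ C
        · obtain ⟨x0, hx0E, hx0C⟩ := hx0
          obtain ⟨d0, hd0D, hd0E⟩ :=
            pickNotMem (show E.card < D.card by rw [hEcard, hDcard]; omega)
          obtain ⟨b, hbB, hbd0⟩ := pick1 cB d0
          obtain ⟨a, haA, hab⟩ := pick1 cA b
          obtain ⟨c, hcF, hcb, hcd0⟩ := pick2 cF b d0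
          obtain ⟨e, heE, hex0⟩ := pick1 cE x0
          exact ⟨a, haA, b, hbB, x0, hx0C, d0, hd0D, e, heE, c, hcF,
            hab, (by rintro rfl; exact hAE _ haA hx0E), (by rintro rfl; exact hI _ hbB hx0E),
            hbd0, (by rintro rfl; exact hd0E hx0E), Ne.symm hex0,
            (by rintro rfl; exact hd0E heE), hcb,
            (by rintro rfl; exact hEF _ hx0E hcF), hcd0⟩
        · push_neg at hx0
          by_cases hd1 : ∃ p, p ∈ D ∧ p ∈ E
          · obtain ⟨d1, hd1D, hd1E⟩ := hd1
            obtain ⟨e, heE, hed1⟩ := pick1 cE d1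
            obtain ⟨b, hbB⟩ := pickMem (le_trans one_le_two cB)
            obtain ⟨a, haA, hab⟩ := pick1 cA b
            obtain ⟨c, hcF, hcb, hcd1⟩ := pick2 cF b d1
            obtain ⟨x, hxC, hxa, hxb, hxc⟩ := pick3 cC a b c
            exact ⟨a, haA, b, hbB, x, hxC, d1, hd1D, e, heE, c, hcF,
              hab, Ne.symm hxa, Ne.symm hxb, (by rintro rfl; exact hI _ hbB hd1E),
              (by rintro rfl; exact hx0 _ hd1E hxC), (by rintro rfl; exact hx0 _ heE hxC),
              Ne.symm hed1, hcb, Ne.symm hxc, hcd1⟩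
          · push_neg at hd1
            obtain ⟨e0, he0E⟩ := pickMem (le_trans one_le_two cE)
            have he0C : e0 ∉ C := hx0 e0 he0E
            have he0D : e0 ∉ D := fun hh => hd1 e0 hh he0E
            exact save1 cA cB cC cD cF he0E he0C he0D
end

section
/- Let H be a path u₁u₂…u₆ (6 vertices) with the 2-distance constraint and lists satisfying |L(u₁)| ≥ 2, |L(u₂)| ≥ 2, |L(u₃)| ≥ 4, |L(u₄)| ≥ 3, |L(u₅)| ≥ 2, |L(u₆)| ≥ 2. Then H admits a 2-distance list coloring. -/
section Aux
variable {α : Type*} [DecidableEq α]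

/-- Auxiliary predicate: every admissible completion at positions 2 (color `x`), 1 (color `b`)
covers all of `A`. -/
def BadPair (A B C : Finset α) (p q : α) : Prop :=
  ∀ x ∈ C, x ≠ p → x ≠ q → ∀ b ∈ B, b ≠ x → b ≠ p → A ⊆ {b, x}

lemma badPair_structure {A B C : Finset α} (hA : 2 ≤ A.card) (hB : 2 ≤ B.card)
    (hC : 4 ≤ C.card) {p q : α} (hbad : BadPair A B C p q) :
    (∀ z ∈ C, z ≠ p → z ≠ q → z ∈ A) ∧ p ∉ A ∧ q ∉ A ∧ p ∈ C ∧ q ∈ C := by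
  set s := (C.erase p).erase q with hs
  have hmem : ∀ z, z ∈ s ↔ z ≠ q ∧ z ≠ p ∧ z ∈ C := by
    intro z; simp [hs, Finset.mem_erase, and_assoc]
  have hscard : 2 ≤ s.card := by
    have h1 : C.card - 1 ≤ (C.erase p).card := Finset.pred_card_le_card_erase
    have h2 : (C.erase p).card - 1 ≤ s.card := Finset.pred_card_le_card_erase
    omega
  obtain ⟨x1, hx1, x2, hx2, hx12⟩ := Finset.one_lt_card.mp (by omega : 1 < s.card)
  -- main: for distinct elements of s, A = {x1, x2}
  have main : ∀ x1 ∈ s, ∀ x2 ∈ s, x1 ≠ x2 → A = {x1, x2} := by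
    intro y1 hy1 y2 hy2 hne
    obtain ⟨hy1q, hy1p, hy1C⟩ := (hmem y1).mp hy1
    obtain ⟨hy2q, hy2p, hy2C⟩ := (hmem y2).mp hy2
    have hcard2 : ∀ a b : α, ({a, b} : Finset α).card ≤ 2 := by
      intro a b
      calc ({a, b} : Finset α).card ≤ ({b} : Finset α).card + 1 := Finset.card_insert_le _ _
        _ ≤ 2 := by simp
    by_cases e1 : ∃ b ∈ B, b ≠ y1 ∧ b ≠ p
    · obtain ⟨b1, hb1B, hb1y, hb1p⟩ := e1
      have hA1 : A = {b1, y1} :=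
        Finset.eq_of_subset_of_card_le (hbad y1 hy1C hy1p hy1q b1 hb1B hb1y hb1p)
          (le_trans (hcard2 _ _) hA)
      by_cases e2 : ∃ b ∈ B, b ≠ y2 ∧ b ≠ p
      · obtain ⟨b2, hb2B, hb2y, hb2p⟩ := e2
        have hA2 : A = {b2, y2} :=
          Finset.eq_of_subset_of_card_le (hbad y2 hy2C hy2p hy2q b2 hb2B hb2y hb2p)
            (le_trans (hcard2 _ _) hA)
        have hy2A : y2 ∈ A := by rw [hA2]; simp
        rw [hA1] at hy2A
        rcases Finset.mem_insert.mp hy2A with h | h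
        · rw [hA1, h, Finset.pair_comm]
        · exact absurd (Finset.mem_singleton.mp h) (Ne.symm hne)
      · push_neg at e2
        rcases eq_or_ne b1 y2 with h | h
        · rw [hA1, h, Finset.pair_comm]
        · exact absurd (e2 b1 hb1B h) hb1p
    · push_neg at e1
      by_cases e2 : ∃ b ∈ B, b ≠ y2 ∧ b ≠ p
      · obtain ⟨b2, hb2B, hb2y, hb2p⟩ := e2
        have hA2 : A = {b2, y2} :=
          Finset.eq_of_subset_of_card_le (hbad y2 hy2C hy2p hy2q b2 hb2B hb2y hb2p)
            (le_trans (hcard2 _ _) hA)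
        rcases eq_or_ne b2 y1 with h | h
        · rw [hA2, h]
        · exact absurd (e1 b2 hb2B h) hb2p
      · push_neg at e2
        obtain ⟨c1, hc1, c2, hc2, hc12⟩ := Finset.one_lt_card.mp (by omega : 1 < B.card)
        have key1 : ∀ c ∈ B, c = p := by
          intro c hc
          rcases eq_or_ne c y1 with h | h
          · rcases eq_or_ne c y2 with h' | h'
            · exact absurd (h.symm.trans h') hne
            · exact e2 c hc h'
          · exact e1 c hc h
        exact absurd ((key1 c1 hc1).trans (key1 c2 hc2).symm) hc12
  have hAeq : A = {x1, x2} := main x1 hx1 x2 hx2 hx12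
  have hsub : ∀ z ∈ C, z ≠ p → z ≠ q → z ∈ A := by
    intro z hzC hzp hzq
    have hzs : z ∈ s := (hmem z).mpr ⟨hzq, hzp, hzC⟩
    by_cases hzx : z = x1
    · rw [hAeq, hzx]; simp
    · rw [main x1 hx1 z hzs (Ne.symm hzx)]; simp
  obtain ⟨hx1q, hx1p, hx1C⟩ := (hmem x1).mp hx1
  obtain ⟨hx2q, hx2p, hx2C⟩ := (hmem x2).mp hx2
  have hpA : p ∉ A := by
    rw [hAeq]; simp only [Finset.mem_insert, Finset.mem_singleton]
    rintro (h | h); exacts [hx1p h.symm, hx2p h.symm]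
  have hqA : q ∉ A := by
    rw [hAeq]; simp only [Finset.mem_insert, Finset.mem_singleton]
    rintro (h | h); exacts [hx1q h.symm, hx2q h.symm]
  have hsA : s ⊆ A := fun z hz => by
    obtain ⟨hzq, hzp, hzC⟩ := (hmem z).mp hz; exact hsub z hzC hzp hzq
  have hsAcard : s.card ≤ 2 := by
    have := Finset.card_le_card hsA
    have : A.card ≤ 2 := by
      rw [hAeq]
      calc ({x1, x2} : Finset α).card ≤ ({x2} : Finset α).card + 1 := Finset.card_insert_le _ _
        _ ≤ 2 := by simp
    omega
  have hpC : p ∈ C := by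
    by_contra hpC
    have hCsub : C ⊆ insert q s := by
      intro z hz
      by_cases hzq : z = q
      · simp [hzq]
      · have hzp : z ≠ p := fun h => hpC (h ▸ hz)
        exact Finset.mem_insert_of_mem ((hmem z).mpr ⟨hzq, hzp, hz⟩)
    have := Finset.card_le_card hCsub
    have := Finset.card_insert_le q s
    omega
  have hqC : q ∈ C := by
    by_contra hqC
    have hCsub : C ⊆ insert p s := by
      intro z hz
      by_cases hzp : z = p
      · simp [hzp]
      · have hzq : z ≠ q := fun h => hqC (h ▸ hz)
        exact Finset.mem_insert_of_mem ((hmem z).mpr ⟨hzq, hzp, hz⟩)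
    have := Finset.card_le_card hCsub
    have := Finset.card_insert_le p s
    omega
  exact ⟨hsub, hpA, hqA, hpC, hqC⟩

lemma badPair_two {A B C : Finset α} (hA : 2 ≤ A.card) (hB : 2 ≤ B.card)
    (hC : 4 ≤ C.card) {p p' q : α} (hpp' : p ≠ p') (hp'q : p' ≠ q)
    (h1 : BadPair A B C p q) (h2 : BadPair A B C p' q) : False := by
  obtain ⟨hsub1, _, _, _, _⟩ := badPair_structure hA hB hC h1
  obtain ⟨_, hp'A, _, hp'C, _⟩ := badPair_structure hA hB hC h2
  exact hp'A (hsub1 p' hp'C (Ne.symm hpp') hp'q)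

lemma key_s13 (A B C D E F : Finset α) (hA : 2 ≤ A.card) (hB : 2 ≤ B.card)
    (hC : 4 ≤ C.card) (hD : 3 ≤ D.card) (hE : 2 ≤ E.card) (hF : 2 ≤ F.card) :
    ∃ p0 p1 p2 p3 p4 p5 : α, p0 ∈ A ∧ p1 ∈ B ∧ p2 ∈ C ∧ p3 ∈ D ∧ p4 ∈ E ∧ p5 ∈ F ∧
      p0 ≠ p1 ∧ p0 ≠ p2 ∧ p1 ≠ p2 ∧ p1 ≠ p3 ∧ p2 ≠ p3 ∧ p2 ≠ p4 ∧ p3 ≠ p4 ∧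
      p3 ≠ p5 ∧ p4 ≠ p5 := by
  by_contra hcon
  -- translate the negation into BadPair statements
  have H : ∀ p5 ∈ F, ∀ p4 ∈ E, p4 ≠ p5 → ∀ p3 ∈ D, p3 ≠ p4 → p3 ≠ p5 →
      BadPair A B C p3 p4 := by
    intro p5 h5 p4 h4 h45 p3 h3 h34 h35 x hx hx3 hx4 b hb hbx hb3
    by_contra hsub
    obtain ⟨p0, hp0A, hp0⟩ := Finset.not_subset.mp hsub
    simp only [Finset.mem_insert, Finset.mem_singleton, not_or] at hp0
    exact hcon ⟨p0, b, x, p3, p4, p5, hp0A, hb, hx, h3, h4, h5,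
      hp0.1, hp0.2, hbx, hb3, hx3, hx4, h34, h35, h45⟩
  -- pick p5 ∈ F and p4 ∈ E \ {p5}
  obtain ⟨p5, hp5F⟩ := Finset.card_pos.mp (by omega : 0 < F.card)
  obtain ⟨p4, hp4E, hp45⟩ := Finset.exists_mem_ne (by omega : 1 < E.card) p5
  -- gadget: two distinct elements of D avoiding a given y
  have two_distinct : ∀ y : α, ∃ d1 ∈ D, ∃ d2 ∈ D, d1 ≠ d2 ∧ d1 ≠ y ∧ d2 ≠ y := by
    intro y
    have h1 : D.card - 1 ≤ (D.erase y).card := Finset.pred_card_le_card_erase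
    obtain ⟨d1, hd1, d2, hd2, hd12⟩ := Finset.one_lt_card.mp (by omega : 1 < (D.erase y).card)
    obtain ⟨hd1y, hd1D⟩ := Finset.mem_erase.mp hd1
    obtain ⟨hd2y, hd2D⟩ := Finset.mem_erase.mp hd2
    exact ⟨d1, hd1D, d2, hd2D, hd12, hd1y, hd2y⟩
  -- p4 ∈ D
  have hp4D : p4 ∈ D := by
    by_contra hp4D
    obtain ⟨d1, hd1D, d2, hd2D, hd12, hd1y, hd2y⟩ := two_distinct p5
    have hd1p4 : d1 ≠ p4 := fun h => hp4D (h ▸ hd1D)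
    have hd2p4 : d2 ≠ p4 := fun h => hp4D (h ▸ hd2D)
    exact badPair_two hA hB hC hd12 hd2p4
      (H p5 hp5F p4 hp4E hp45 d1 hd1D hd1p4 hd1y)
      (H p5 hp5F p4 hp4E hp45 d2 hd2D hd2p4 hd2y)
  -- p5 ∈ D
  have hp5D : p5 ∈ D := by
    by_contra hp5D
    obtain ⟨d1, hd1D, d2, hd2D, hd12, hd1y, hd2y⟩ := two_distinct p4
    have hd1p5 : d1 ≠ p5 := fun h => hp5D (h ▸ hd1D)
    have hd2p5 : d2 ≠ p5 := fun h => hp5D (h ▸ hd2D)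
    exact badPair_two hA hB hC hd12 hd2y
      (H p5 hp5F p4 hp4E hp45 d1 hd1D hd1y hd1p5)
      (H p5 hp5F p4 hp4E hp45 d2 hd2D hd2y hd2p5)
  -- pick p3 ∈ D \ {p4, p5}
  have : 0 < ((D.erase p4).erase p5).card := by
    have h1 : D.card - 1 ≤ (D.erase p4).card := Finset.pred_card_le_card_erase
    have h2 : (D.erase p4).card - 1 ≤ ((D.erase p4).erase p5).card :=
      Finset.pred_card_le_card_erase
    omega
  obtain ⟨p3, hp3⟩ := Finset.card_pos.mp this
  obtain ⟨hp35, hp3'⟩ := Finset.mem_erase.mp hp3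
  obtain ⟨hp34, hp3D⟩ := Finset.mem_erase.mp hp3'
  have Bad34 : BadPair A B C p3 p4 := H p5 hp5F p4 hp4E hp45 p3 hp3D hp34 hp35
  -- D ⊆ {p3, p4, p5}
  have hDsub : ∀ d ∈ D, d = p3 ∨ d = p4 ∨ d = p5 := by
    intro d hdD
    by_contra hd
    push_neg at hd
    obtain ⟨hd3, hd4, hd5⟩ := hd
    exact badPair_two hA hB hC (Ne.symm hd3) hd4 Bad34
      (H p5 hp5F p4 hp4E hp45 d hdD hd4 hd5)
  -- second element of F
  obtain ⟨p5', hp5'F, hp5'5⟩ := Finset.exists_mem_ne (by omega : 1 < F.card) p5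
  by_cases hp45' : p4 = p5'
  · -- p4 = p5' : pick second element of E
    obtain ⟨p4'', hp4''E, hp4''4⟩ := Finset.exists_mem_ne (by omega : 1 < E.card) p4
    have hp4''5' : p4'' ≠ p5' := by rw [← hp45']; exact hp4''4
    by_cases hp4''D : p4'' ∈ D
    · rcases hDsub p4'' hp4''D with h | h | h
      · -- p4'' = p3 : Bad p5 p3
        have Bad53 : BadPair A B C p5 p3 := by
          rw [← h]
          exact H p5' hp5'F p4'' hp4''E hp4''5' p5 hp5D
            (by rw [h]; exact Ne.symm hp35) (by rw [← hp45']; exact Ne.symm hp45)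
        obtain ⟨hsub34, _, _, _, _⟩ := badPair_structure hA hB hC Bad34
        obtain ⟨_, hp5A, _, hp5C, _⟩ := badPair_structure hA hB hC Bad53
        exact hp5A (hsub34 p5 hp5C (Ne.symm hp35) (Ne.symm hp45))
      · exact hp4''4 h
      · -- p4'' = p5 : Bad p3 p5
        have Bad35 : BadPair A B C p3 p5 := by
          rw [← h]
          exact H p5' hp5'F p4'' hp4''E hp4''5' p3 hp3D
            (by rw [h]; exact hp35) (by rw [← hp45']; exact hp34)
        obtain ⟨hsub34, _, _, _, _⟩ := badPair_structure hA hB hC Bad34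
        obtain ⟨_, _, hp5A, _, hp5C⟩ := badPair_structure hA hB hC Bad35
        exact hp5A (hsub34 p5 hp5C (Ne.symm hp35) (Ne.symm hp45))
    · -- p4'' ∉ D : two distinct elements of D \ {p4} give contradiction
      obtain ⟨d1, hd1D, d2, hd2D, hd12, hd1y, hd2y⟩ := two_distinct p4
      have hd1'' : d1 ≠ p4'' := fun hh => hp4''D (hh ▸ hd1D)
      have hd2'' : d2 ≠ p4'' := fun hh => hp4''D (hh ▸ hd2D)
      exact badPair_two hA hB hC hd12 hd2''
        (H p5' hp5'F p4'' hp4''E hp4''5' d1 hd1D hd1'' ((by rw [← hp45']; exact hd1y) : d1 ≠ p5'))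
        (H p5' hp5'F p4'' hp4''E hp4''5' d2 hd2D hd2'' ((by rw [← hp45']; exact hd2y) : d2 ≠ p5'))
  · -- p4 ≠ p5'
    by_cases hp5'D : p5' ∈ D
    · -- p5' = p3, so Bad p5 p4
      have hp5'3 : p5' = p3 := by
        rcases hDsub p5' hp5'D with h | h | h
        · exact h
        · exact absurd h.symm hp45'
        · exact absurd h hp5'5
      have Bad54 : BadPair A B C p5 p4 :=
        H p5' hp5'F p4 hp4E hp45' p5 hp5D (Ne.symm hp45)
          (by rw [hp5'3]; exact Ne.symm hp35)
      exact badPair_two hA hB hC hp35 (Ne.symm hp45) Bad34 Bad54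
    · -- p5' ∉ D
      obtain ⟨d1, hd1D, d2, hd2D, hd12, hd1y, hd2y⟩ := two_distinct p4
      have hd1' : d1 ≠ p5' := fun hh => hp5'D (hh ▸ hd1D)
      have hd2' : d2 ≠ p5' := fun hh => hp5'D (hh ▸ hd2D)
      exact badPair_two hA hB hC hd12 hd2y
        (H p5' hp5'F p4 hp4E hp45' d1 hd1D hd1y hd1')
        (H p5' hp5'F p4 hp4E hp45' d2 hd2D hd2y hd2')

end Aux

open SimpleGraph

theorem stmt13 {α : Type*} (L : Fin 6 → Finset α)
    (h1 : 2 ≤ (L 0).card) (h2 : 2 ≤ (L 1).card) (h3 : 4 ≤ (L 2).card)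
    (h4 : 3 ≤ (L 3).card) (h5 : 2 ≤ (L 4).card) (h6 : 2 ≤ (L 5).card) :
    ∃ φ : Fin 6 → α, PathColoring L φ := by
  classical
  obtain ⟨p0, p1, p2, p3, p4, p5, m0, m1, m2, m3, m4, m5,
    d01, d02, d12, d13, d23, d24, d34, d35, d45⟩ :=
    key_s13 (L 0) (L 1) (L 2) (L 3) (L 4) (L 5) h1 h2 h3 h4 h5 h6
  refine ⟨![p0, p1, p2, p3, p4, p5], ?_, ?_⟩
  · intro i; fin_cases i <;> simpa
  · intro i j hlt hle
    fin_cases i <;> fin_cases j <;>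
      simp_all [show (![p0, p1, p2, p3, p4, p5] : Fin 6 → α) 5 = p5 from rfl]
end

section
/- Let H be a subcubic graph of girth at least 11, φ a 2-distance coloring of H with 4 colors, and u₁u₂u₃u₄u₅u₆ a path of length 5 in H. If φ(u₁) = φ(u₆), then φ(u₂) = φ(u₅). -/
open SimpleGraph

/-- `u` and `v` are distinct vertices at distance at most 2 in `G`. -/
def TwoDistClose {V : Type*} (G : SimpleGraph V) (u v : V) : Prop :=
  u ≠ v ∧ (G.Adj u v ∨ ∃ w, G.Adj u w ∧ G.Adj w v)

/-- `G` admits a 2-distance coloring with `k` colors. -/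
def TwoDistColorable {V : Type*} (G : SimpleGraph V) (k : ℕ) : Prop :=
  ∃ φ : V → Fin k, ∀ u v, TwoDistClose G u v → φ u ≠ φ v

/-- The 2-distance chromatic number of `G`. -/
noncomputable def chi2 {V : Type*} (G : SimpleGraph V) : ℕ :=
  sInf {k | TwoDistColorable G k}

lemma key4 : ∀ a b c d e f : Fin 4,
    a ≠ b → a ≠ c → b ≠ c → b ≠ d → c ≠ d → c ≠ e → d ≠ e → d ≠ f → e ≠ f →
    a = f → b = e := by decide

/-- In a subcubic graph of girth at least 11 with a 2-distance 4-coloring `φ`, for any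
path `u₁u₂u₃u₄u₅u₆` of length 5, if `φ(u₁) = φ(u₆)` then `φ(u₂) = φ(u₅)`. -/
theorem stmt15 {V : Type*} (H : SimpleGraph V)
    (hsub : ∀ v, (H.neighborSet v).ncard ≤ 3)
    (hgirth : 11 ≤ H.egirth)
    (φ : V → Fin 4) (hφ : ∀ u v, TwoDistClose H u v → φ u ≠ φ v)
    (u : Fin 6 → V) (hinj : Function.Injective u)
    (hadj : ∀ i : Fin 5, H.Adj (u i.castSucc) (u i.succ))
    (heq : φ (u 0) = φ (u 5)) :
    φ (u 1) = φ (u 4) := by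
  have a01 : H.Adj (u 0) (u 1) := hadj 0
  have a12 : H.Adj (u 1) (u 2) := hadj 1
  have a23 : H.Adj (u 2) (u 3) := hadj 2
  have a34 : H.Adj (u 3) (u 4) := hadj 3
  have a45 : H.Adj (u 4) (u 5) := hadj 4
  have ne : ∀ i j : Fin 6, i ≠ j → u i ≠ u j := fun i j h => fun hu => h (hinj hu)
  have h01 := hφ _ _ ⟨ne 0 1 (by decide), Or.inl a01⟩
  have h02 := hφ _ _ ⟨ne 0 2 (by decide), Or.inr ⟨u 1, a01, a12⟩⟩
  have h12 := hφ _ _ ⟨ne 1 2 (by decide), Or.inl a12⟩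
  have h13 := hφ _ _ ⟨ne 1 3 (by decide), Or.inr ⟨u 2, a12, a23⟩⟩
  have h23 := hφ _ _ ⟨ne 2 3 (by decide), Or.inl a23⟩
  have h24 := hφ _ _ ⟨ne 2 4 (by decide), Or.inr ⟨u 3, a23, a34⟩⟩
  have h34 := hφ _ _ ⟨ne 3 4 (by decide), Or.inl a34⟩
  have h35 := hφ _ _ ⟨ne 3 5 (by decide), Or.inr ⟨u 4, a34, a45⟩⟩
  have h45 := hφ _ _ ⟨ne 4 5 (by decide), Or.inl a45⟩
  exact key4 _ _ _ _ _ _ h01 h02 h12 h13 h23 h24 h34 h35 h45 heq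
end

section
/- Let H be a subcubic graph of girth at least 11 and φ a 2-distance 4-coloring of H. Suppose u₁u₂u₃u₄u₅u₆, u₃u₁'u₂'u₃'u₄'v₁, and u₄u₁''u₂''u₃''u₄''v₁ are paths of length 5 in H (all vertices involved distinct), and let v₀ ∉ {u₄', u₄''} be adjacent to v₁. If φ(u₁) = φ(u₆) = φ(v₀), then φ(u₂) = φ(u₅) = φ(v₁). -/
open SimpleGraph

/-- In `Fin 4`, two values avoiding the same three pairwise-distinct values are equal. -/
lemma fin4_unique {a b c x y : Fin 4} (hab : a ≠ b) (hac : a ≠ c) (hbc : b ≠ c)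
    (hxa : x ≠ a) (hxb : x ≠ b) (hxc : x ≠ c)
    (hya : y ≠ a) (hyb : y ≠ b) (hyc : y ≠ c) : x = y := by
  revert a b c x y; decide

/-- The "triangle lemma": in a subcubic graph of girth at least 11 with a 2-distance
4-coloring `φ`, given paths `u₁u₂u₃u₄u₅u₆`, `u₃a₁a₂a₃a₄v₁`, `u₄b₁b₂b₃b₄v₁` of length 5
(all vertices distinct) and a vertex `v₀ ∉ {a₄, b₄}` adjacent to `v₁`, if
`φ(u₁) = φ(u₆) = φ(v₀)` then `φ(u₂) = φ(u₅) = φ(v₁)`. -/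
theorem stmt16 {V : Type*} (H : SimpleGraph V)
    (hsub : ∀ v, (H.neighborSet v).ncard ≤ 3)
    (hgirth : 11 ≤ H.egirth)
    (φ : V → Fin 4) (hφ : ∀ u v, TwoDistClose H u v → φ u ≠ φ v)
    (u₁ u₂ u₃ u₄ u₅ u₆ a₁ a₂ a₃ a₄ b₁ b₂ b₃ b₄ v₁ v₀ : V)
    (hdistinct :
      [u₁, u₂, u₃, u₄, u₅, u₆, a₁, a₂, a₃, a₄, b₁, b₂, b₃, b₄, v₁, v₀].Pairwise (· ≠ ·))
    (e1 : H.Adj u₁ u₂) (e2 : H.Adj u₂ u₃) (e3 : H.Adj u₃ u₄) (e4 : H.Adj u₄ u₅)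
    (e5 : H.Adj u₅ u₆)
    (f1 : H.Adj u₃ a₁) (f2 : H.Adj a₁ a₂) (f3 : H.Adj a₂ a₃) (f4 : H.Adj a₃ a₄)
    (f5 : H.Adj a₄ v₁)
    (g1 : H.Adj u₄ b₁) (g2 : H.Adj b₁ b₂) (g3 : H.Adj b₂ b₃) (g4 : H.Adj b₃ b₄)
    (g5 : H.Adj b₄ v₁)
    (hv0 : H.Adj v₀ v₁)
    (heq1 : φ u₁ = φ u₆) (heq2 : φ u₆ = φ v₀) :
    φ u₂ = φ u₅ ∧ φ u₅ = φ v₁ := by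
  have hp := List.pairwise_iff_getElem.mp hdistinct
  -- vertex distinctness facts (indices in the list)
  have N02 : u₁ ≠ u₃ := hp 0 2 (by norm_num) (by norm_num) (by norm_num)
  have N13 : u₂ ≠ u₄ := hp 1 3 (by norm_num) (by norm_num) (by norm_num)
  have N24 : u₃ ≠ u₅ := hp 2 4 (by norm_num) (by norm_num) (by norm_num)
  have N35 : u₄ ≠ u₆ := hp 3 5 (by norm_num) (by norm_num) (by norm_num)
  have N16 : u₂ ≠ a₁ := hp 1 6 (by norm_num) (by norm_num) (by norm_num)
  have N36 : u₄ ≠ a₁ := hp 3 6 (by norm_num) (by norm_num) (by norm_num)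
  have N2_10 : u₃ ≠ b₁ := hp 2 10 (by norm_num) (by norm_num) (by norm_num)
  have N4_10 : u₅ ≠ b₁ := hp 4 10 (by norm_num) (by norm_num) (by norm_num)
  have N68 : a₁ ≠ a₃ := hp 6 8 (by norm_num) (by norm_num) (by norm_num)
  have N9_15 : a₄ ≠ v₀ := hp 9 15 (by norm_num) (by norm_num) (by norm_num)
  have N8_14 : a₃ ≠ v₁ := hp 8 14 (by norm_num) (by norm_num) (by norm_num)
  have N79 : a₂ ≠ a₄ := hp 7 9 (by norm_num) (by norm_num) (by norm_num)
  have N27 : u₃ ≠ a₂ := hp 2 7 (by norm_num) (by norm_num) (by norm_num)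
  have N10_12 : b₁ ≠ b₃ := hp 10 12 (by norm_num) (by norm_num) (by norm_num)
  have N13_15 : b₄ ≠ v₀ := hp 13 15 (by norm_num) (by norm_num) (by norm_num)
  have N12_14 : b₃ ≠ v₁ := hp 12 14 (by norm_num) (by norm_num) (by norm_num)
  have N11_13 : b₂ ≠ b₄ := hp 11 13 (by norm_num) (by norm_num) (by norm_num)
  have N3_11 : u₄ ≠ b₂ := hp 3 11 (by norm_num) (by norm_num) (by norm_num)
  -- color constraints from adjacency / distance 2
  have adj1 : ∀ {x y : V}, H.Adj x y → φ x ≠ φ y := fun h => hφ _ _ ⟨h.ne, Or.inl h⟩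
  have adj2 : ∀ {x y : V}, x ≠ y → ∀ {w : V}, H.Adj x w → H.Adj w y → φ x ≠ φ y :=
    fun hne _ h1 h2 => hφ _ _ ⟨hne, Or.inr ⟨_, h1, h2⟩⟩
  have c12 : φ u₁ ≠ φ u₂ := adj1 e1
  have c13 : φ u₁ ≠ φ u₃ := adj2 N02 e1 e2
  have c34 : φ u₃ ≠ φ u₄ := adj1 e3
  have c14 : φ u₁ ≠ φ u₄ := by rw [heq1]; exact adj2 N35.symm e5.symm e4.symm
  have c15 : φ u₁ ≠ φ u₅ := by rw [heq1]; exact (adj1 e5).symm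
  have c23 : φ u₂ ≠ φ u₃ := adj1 e2
  have c24 : φ u₂ ≠ φ u₄ := adj2 N13 e2 e3
  have c53 : φ u₅ ≠ φ u₃ := (adj2 N24 e3 e4).symm
  have c54 : φ u₅ ≠ φ u₄ := (adj1 e4).symm
  -- φ u₂ = φ u₅
  have hAB : φ u₂ = φ u₅ :=
    fin4_unique c13 c14 c34 c12.symm c23 c24 c15.symm c53 c54
  -- a₁ and b₁ get the color of u₁
  have cA1 : φ a₁ = φ u₁ :=
    fin4_unique c23 c24 c34 (adj2 N16 e2 f1).symm (adj1 f1).symm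
      (adj2 N36 e3.symm f1).symm c12 c13 c14
  have cB1 : φ b₁ = φ u₁ :=
    fin4_unique c34 c53.symm c54.symm (adj2 N2_10 e3 g1).symm (adj1 g1).symm
      (adj2 N4_10 e4.symm g1).symm c13 c14 c15
  have cv0 : φ u₁ = φ v₀ := heq1.trans heq2
  have d_a2a1 : φ a₂ ≠ φ u₁ := by rw [← cA1]; exact (adj1 f2).symm
  have d_a3a1 : φ a₃ ≠ φ u₁ := by rw [← cA1]; exact (adj2 N68 f2 f3).symm
  have d_a4 : φ a₄ ≠ φ u₁ := by rw [cv0]; exact adj2 N9_15 f5 hv0.symm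
  have d_v1 : φ v₁ ≠ φ u₁ := by rw [cv0]; exact (adj1 hv0).symm
  have d_a3a4 : φ a₃ ≠ φ a₄ := adj1 f4
  have d_a3v1 : φ a₃ ≠ φ v₁ := adj2 N8_14 f4 f5
  have d_a4v1 : φ a₄ ≠ φ v₁ := adj1 f5
  -- a₂ gets the color of v₁, hence φ v₁ ≠ φ u₃
  have cA2 : φ a₂ = φ v₁ :=
    fin4_unique d_a3a1.symm d_a4.symm d_a3a4 d_a2a1 (adj1 f3) (adj2 N79 f3 f4)
      d_v1 d_a3v1.symm d_a4v1.symm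
  have dv1u3 : φ v₁ ≠ φ u₃ := by rw [← cA2]; exact (adj2 N27 f1 f2).symm
  -- same on the b-path, hence φ v₁ ≠ φ u₄
  have d_b2b1 : φ b₂ ≠ φ u₁ := by rw [← cB1]; exact (adj1 g2).symm
  have d_b3b1 : φ b₃ ≠ φ u₁ := by rw [← cB1]; exact (adj2 N10_12 g2 g3).symm
  have d_b4 : φ b₄ ≠ φ u₁ := by rw [cv0]; exact adj2 N13_15 g5 hv0.symm
  have d_b3b4 : φ b₃ ≠ φ b₄ := adj1 g4
  have d_b3v1 : φ b₃ ≠ φ v₁ := adj2 N12_14 g4 g5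
  have d_b4v1 : φ b₄ ≠ φ v₁ := adj1 g5
  have cB2 : φ b₂ = φ v₁ :=
    fin4_unique d_b3b1.symm d_b4.symm d_b3b4 d_b2b1 (adj1 g3) (adj2 N11_13 g3 g4)
      d_v1 d_b3v1.symm d_b4v1.symm
  have dv1u4 : φ v₁ ≠ φ u₄ := by rw [← cB2]; exact (adj2 N3_11 g1 g2).symm
  -- conclude
  exact ⟨hAB, fin4_unique c13 c14 c34 c15.symm c53 c54 d_v1 dv1u3 dv1u4⟩
end
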